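/- Let Σ be a finite alphabet and n, k positive integers. Suppose Gen : {0,1}^s → ({0,1}^n)^k is a γ-PRG for (k,n,Σ) block decision trees and Ext : {0,1}^s × {0,1}^d → {0,1}^s is an average-case (s − k·log₂|Σ|, β)-extractor. Define Gen′ : {0,1}^{s+d} → ({0,1}^n)^{2k} by Gen′(x,y) = (Gen(x), Gen(Ext(x,y))). Then Gen′ is a (2γ+β)-PRG for (2k,n,Σ) block decision trees. -/

import Mathlib

/-!
Split the output of a `(2k)`-tree into `(σ₁, σ₂)`: `σ₁` is what the top `k` levels output on
the first `k` blocks, and `σ₂` is what the subtree below `σ₁` outputs on the last `k` blocks.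
Pass from the pseudorandom to the truly random distribution of `(σ₁, σ₂)` through four hybrids:
blocks `(Gen x, Gen (Ext x y))`, then `(Gen x, Gen r)` with a fresh uniform seed `r`, then
`(Gen x, X₂)`, then `(X₁, X₂)`. The first step costs `β`: since `σ₁` takes at most `|Σ|^k`
values, `x` keeps average min-entropy `s - k log₂ |Σ|` given `σ₁`, so `(σ₁, Ext x y)` is
`β`-close to `(σ₁, r)`, and applying `(σ₁, r) ↦ (σ₁, σ₂)` does not increase the distance.
The other two steps cost `γ` each: `Gen` fools the subtree below every fixed `σ₁`, and it
fools the top `k` levels.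
-/

open Classical

/-- Probability of `P` under the uniform distribution on a finite type. -/
noncomputable def pr {α : Type*} [Fintype α] (P : α → Prop) : ℝ :=
  ((Finset.univ.filter P).card : ℝ) / (Fintype.card α : ℝ)

/-- `f : {0,1}^n → ℝ^d` is `(ε,δ)`-concentrated at `μ`. -/
def Concentrated (n d : ℕ) (ε δ : ℝ)
    (f : (Fin n → Bool) → Fin d → ℝ) (μ : Fin d → ℝ) : Prop :=
  pr (fun X : Fin n → Bool => ∃ j, |f X j - μ j| > ε) ≤ δ

/-- A deterministic owner for `k` rounds of `(ε,δ)`-concentrated functions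
`{0,1}^n → ℝ^d`: given the history of responses `Y_1,…,Y_{i-1}`, it produces
a function `f_i` together with a point `μ_i` at which `f_i` is concentrated. -/
structure Owner (n k d : ℕ) (ε δ : ℝ) where
  act : List (Fin d → ℝ) → (((Fin n → Bool) → Fin d → ℝ) × (Fin d → ℝ))
  conc : ∀ ys : List (Fin d → ℝ), ys.length < k →
    Concentrated n d ε δ (act ys).1 (act ys).2

/-- A one-query steward with randomness complexity `m`: in each round it chooses
a query point from its randomness and the past query answers, and it chooses a
response from its randomness and the past and current query answers. -/
structure Steward (n k d m : ℕ) where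
  q : (Fin m → Bool) → List (Fin d → ℝ) → (Fin n → Bool)
  r : (Fin m → Bool) → List (Fin d → ℝ) → (Fin d → ℝ) → (Fin d → ℝ)

/-- The interaction `O ↔ S(Z)` for `i` rounds: the list of triples `(Y_i, W_i, μ_i)`. -/
noncomputable def run {n k d m : ℕ} {ε δ : ℝ} (O : Owner n k d ε δ) (S : Steward n k d m)
    (Z : Fin m → Bool) : ℕ → List ((Fin d → ℝ) × (Fin d → ℝ) × (Fin d → ℝ))
  | 0 => []
  | i + 1 =>
    let h := run O S Z i
    let fμ := O.act (h.map fun p => p.1)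
    let X := S.q Z (h.map fun p => p.2.1)
    let W := fμ.1 X
    h ++ [(S.r Z (h.map fun p => p.2.1) W, W, fμ.2)]

/-- `S` is a one-query `(ε',δ')`-steward for `k` adaptively chosen
`(ε,δ)`-concentrated functions `{0,1}^n → ℝ^d`. -/
def IsSteward (n k d m : ℕ) (ε δ ε' δ' : ℝ) (S : Steward n k d m) : Prop :=
  ∀ O : Owner n k d ε δ,
    pr (fun Z : Fin m → Bool =>
      ∃ p ∈ run O S Z k, ∃ j : Fin d, |p.1 j - p.2.2 j| > ε') ≤ δ'

/-- The output string of a `(k,n,Σ)` block decision tree, given as the family of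
node functions `v_w` indexed by strings `w`, on input the list `Xs` of blocks:
`σ_i = v_{(σ_1,…,σ_{i-1})}(X_i)`. -/
def treeOutList {A I : Type*} (v : List A → I → A) (Xs : List I) : List A :=
  Xs.foldl (fun w X => w ++ [v w X]) []

/-- `Gen` is a `γ`-PRG for `(k,n,A)` block decision trees: for every tree, the total
variation distance between the output distribution on pseudorandom inputs and on
truly random inputs is at most `γ`. -/
def IsBDTPRG (n k s : ℕ) (A : Type*) [Fintype A] (γ : ℝ)
    (Gen : (Fin s → Bool) → Fin k → (Fin n → Bool)) : Prop :=
  ∀ v : List A → (Fin n → Bool) → A,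
    (1 / 2) * ∑ σ : Fin k → A,
      |pr (fun x : Fin s → Bool => treeOutList v (List.ofFn (Gen x)) = List.ofFn σ)
        - pr (fun X : Fin k → (Fin n → Bool) => treeOutList v (List.ofFn X) = List.ofFn σ)|
      ≤ γ

/-- `prMass p P`: probability of the event `P` under the mass function `p`. -/
noncomputable def prMass {Ω : Type*} [Fintype Ω] (p : Ω → ℝ) (P : Ω → Prop) : ℝ :=
  ∑ ω ∈ Finset.univ.filter P, p ω

/-- `Ext : {0,1}^s × {0,1}^d → {0,1}^m` is an average-case `(κ, β)`-extractor:
for every pair of random variables `(X, V)` on a common finite probability space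
with `H̃_∞(X|V) ≥ κ` (equivalently, `E_{v∼V}[max_x Pr[X=x | V=v]] ≤ 2^{-κ}`),
the joint distributions of `(V, Ext(X,Y))` (with `Y` uniform, independent of `(X,V)`)
and `(V, Z)` (with `Z` uniform, independent of `V`) are `β`-close in total variation. -/
def IsAvgExtractor (s d m : ℕ) (κ β : ℝ)
    (Ext : (Fin s → Bool) → (Fin d → Bool) → (Fin m → Bool)) : Prop :=
  ∀ (Ω : Type) [Fintype Ω] (Vt : Type) [Fintype Vt]
    (p : Ω → ℝ) (X : Ω → (Fin s → Bool)) (V : Ω → Vt),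
    (∀ ω, 0 ≤ p ω) → (∑ ω, p ω) = 1 →
    (∑ v : Vt, ⨆ x : Fin s → Bool, prMass p (fun ω => X ω = x ∧ V ω = v)) ≤ (2 : ℝ) ^ (-κ) →
    (1 / 2) * ∑ v : Vt, ∑ z : Fin m → Bool,
      |(∑ y : Fin d → Bool, prMass p (fun ω => V ω = v ∧ Ext (X ω) y = z)) / 2 ^ d
        - prMass p (fun ω => V ω = v) / 2 ^ m| ≤ β

open Finset

section UniformLaw

variable {Ω Ω₁ Ω₂ α β : Type*} [Fintype Ω] [Fintype Ω₁] [Fintype Ω₂]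

noncomputable def law (f : Ω → α) (a : α) : ℝ := pr fun ω => f ω = a

lemma pr_congr {P Q : Ω → Prop} (h : ∀ ω, P ω ↔ Q ω) : pr P = pr Q := by
  obtain rfl : P = Q := funext fun ω => propext (h ω)
  rfl

lemma pr_prod (P : Ω₁ → Prop) (Q : Ω₂ → Prop) :
    pr (fun p : Ω₁ × Ω₂ => P p.1 ∧ Q p.2) = pr P * pr Q := by
  rw [pr, pr, pr, div_mul_div_comm, Fintype.card_prod, Nat.cast_mul]
  congr 1
  norm_cast
  rw [← card_product, ← filter_product, univ_product_univ]
  convert rfl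

lemma pr_eq_self (x : Ω) : pr (fun ω => ω = x) = (Fintype.card Ω : ℝ)⁻¹ := by
  rw [pr, card_eq_one.2 ⟨x, by ext; simp⟩, Nat.cast_one, one_div]

lemma pr_prod_eq_sum_div (P : Ω₁ × Ω₂ → Prop) :
    pr P = (∑ y, pr fun x => P (x, y)) / Fintype.card Ω₂ := by
  simp only [pr, ← sum_div, div_div, Fintype.card_prod, Nat.cast_mul]
  congr 1
  norm_cast
  simp only [card_eq_sum_ones, sum_filter, Fintype.sum_prod_type]
  exact sum_comm

lemma law_nonneg (f : Ω → α) (a : α) : 0 ≤ law f a := by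
  unfold law pr; positivity

lemma sum_law [Nonempty Ω] [Fintype α] (f : Ω → α) : ∑ a, law f a = 1 := by
  simp only [law, pr, ← sum_div, ← Nat.cast_sum]
  rw [div_eq_one_iff_eq (Nat.cast_ne_zero.2 Fintype.card_ne_zero), Nat.cast_inj]
  convert sum_card_fiberwise_eq_card_filter univ univ f
  simp

lemma law_comp_equiv (e : Ω₁ ≃ Ω) (f : Ω → α) : law (f ∘ e) = law f := by
  ext a
  simp only [law, pr, Fintype.card_congr e, Function.comp_apply]
  congr 2
  exact card_equiv e (by simp)

lemma law_comp [Fintype α] (h : α → β) (f : Ω → α) (b : β) :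
    law (h ∘ f) b = ∑ a with h a = b, law f a := by
  simp only [law, pr, ← sum_div, ← Nat.cast_sum]
  congr 2
  convert (sum_card_fiberwise_eq_card_filter univ {a | h a = b} f).symm
  simp

lemma law_prod_dep (f : Ω₁ → α) (K : α → Ω₂ → β) (a : α) (b : β) :
    law (fun p : Ω₁ × Ω₂ => (f p.1, K (f p.1) p.2)) (a, b) = law f a * law (K a) b := by
  rw [law, law, law, ← pr_prod]
  refine pr_congr fun p => ⟨fun h => ?_, ?_⟩
  · obtain ⟨rfl, rfl⟩ := Prod.mk.inj h
    exact ⟨rfl, rfl⟩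
  · rintro ⟨rfl, rfl⟩; rfl

end UniformLaw

section TotalVariation

variable {Ω Ω₁ Ω₂ α β : Type*} [Fintype Ω] [Fintype Ω₁] [Fintype Ω₂] [Fintype α] [Fintype β]

noncomputable def tvDist (p q : α → ℝ) : ℝ := 1 / 2 * ∑ a, |p a - q a|

lemma tvDist_triangle (p q r : α → ℝ) : tvDist p r ≤ tvDist p q + tvDist q r := by
  rw [tvDist, tvDist, tvDist, ← mul_add, ← sum_add_distrib]
  gcongr with a
  exact abs_sub_le _ _ _

lemma tvDist_law_comp_le (h : α → β) (f : Ω₁ → α) (g : Ω₂ → α) :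
    tvDist (law (h ∘ f)) (law (h ∘ g)) ≤ tvDist (law f) (law g) := by
  rw [tvDist, tvDist]
  gcongr 1 / 2 * ?_
  calc ∑ b, |law (h ∘ f) b - law (h ∘ g) b|
      = ∑ b, |∑ a with h a = b, (law f a - law g a)| := by simp only [law_comp, sum_sub_distrib]
    _ ≤ ∑ b, ∑ a with h a = b, |law f a - law g a| := sum_le_sum fun b _ => abs_sum_le_sum_abs _ _
    _ = ∑ a, |law f a - law g a| := sum_fiberwise _ _ _

lemma tvDist_law_prod_dep_le [Nonempty Ω] {γ : ℝ} (f : Ω → α) (K₁ : α → Ω₁ → β)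
    (K₂ : α → Ω₂ → β) (hK : ∀ a, tvDist (law (K₁ a)) (law (K₂ a)) ≤ γ) :
    tvDist (law fun p : Ω × Ω₁ => (f p.1, K₁ (f p.1) p.2))
      (law fun p : Ω × Ω₂ => (f p.1, K₂ (f p.1) p.2)) ≤ γ :=
  calc _ = ∑ a, law f a * tvDist (law (K₁ a)) (law (K₂ a)) := by
        simp only [tvDist, Fintype.sum_prod_type, law_prod_dep, ← mul_sub, abs_mul,
          abs_of_nonneg (law_nonneg _ _), mul_sum]
        exact sum_congr rfl fun _ _ => sum_congr rfl fun _ _ => mul_left_comm _ _ _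
    _ ≤ ∑ a, law f a * γ := sum_le_sum fun a _ => mul_le_mul_of_nonneg_left (hK a) (law_nonneg _ _)
    _ = γ := by rw [← sum_mul, sum_law, one_mul]

lemma tvDist_law_prod_dep [Nonempty Ω₂] (f : Ω → α) (g : Ω₁ → α) (K : α → Ω₂ → β) :
    tvDist (law fun p : Ω × Ω₂ => (f p.1, K (f p.1) p.2))
      (law fun p : Ω₁ × Ω₂ => (g p.1, K (g p.1) p.2)) = tvDist (law f) (law g) := by
  simp only [tvDist, Fintype.sum_prod_type, law_prod_dep, ← sub_mul, abs_mul,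
    abs_of_nonneg (law_nonneg _ _), ← mul_sum, sum_law, mul_one]

end TotalVariation

section BlockDecisionTree

variable {A I : Type*}

def subtree (v : List A → I → A) (w : List A) : List A → I → A := fun u => v (w ++ u)

lemma subtree_subtree (v : List A → I → A) (w u : List A) :
    subtree (subtree v w) u = subtree v (w ++ u) :=
  funext fun _ => by simp [subtree]

lemma foldl_eq_append_treeOutList (v : List A → I → A) (w : List A) (L : List I) :
    L.foldl (fun w X => w ++ [v w X]) w = w ++ treeOutList (subtree v w) L := by
  induction L generalizing v w with
  | nil => simp [treeOutList]
  | cons X L ih =>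
    simp only [List.foldl_cons, treeOutList, List.nil_append]
    rw [ih, ih, subtree_subtree]
    simp [subtree]

lemma length_treeOutList (v : List A → I → A) (L : List I) :
    (treeOutList v L).length = L.length := by
  induction L generalizing v with
  | nil => rfl
  | cons X L ih =>
    rw [treeOutList, List.foldl_cons, foldl_eq_append_treeOutList]
    simp [ih]

lemma treeOutList_append (v : List A → I → A) (L₁ L₂ : List I) :
    treeOutList v (L₁ ++ L₂) =
      treeOutList v L₁ ++ treeOutList (subtree v (treeOutList v L₁)) L₂ := by
  rw [treeOutList, List.foldl_append, ← treeOutList, foldl_eq_append_treeOutList]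

def treeOut {k : ℕ} (v : List A → I → A) (X : Fin k → I) : Fin k → A :=
  fun i => (treeOutList v (List.ofFn X))[i.1]'(by simp [length_treeOutList])

lemma ofFn_treeOut {k : ℕ} (v : List A → I → A) (X : Fin k → I) :
    List.ofFn (treeOut v X) = treeOutList v (List.ofFn X) :=
  List.ext_getElem (by simp [length_treeOutList]) fun _ _ _ => by simp [treeOut]

lemma treeOut_eq_iff {k : ℕ} (v : List A → I → A) (X : Fin k → I) (σ : Fin k → A) :
    treeOut v X = σ ↔ treeOutList v (List.ofFn X) = List.ofFn σ := by
  rw [← ofFn_treeOut, List.ofFn_inj]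

lemma treeOut_append {k m : ℕ} (v : List A → I → A) (X₁ : Fin k → I) (X₂ : Fin m → I) :
    treeOut v (Fin.append X₁ X₂) =
      Fin.append (treeOut v X₁) (treeOut (subtree v (List.ofFn (treeOut v X₁))) X₂) := by
  apply List.ofFn_injective
  rw [List.ofFn_fin_append, ofFn_treeOut, ofFn_treeOut, ofFn_treeOut, List.ofFn_fin_append,
    treeOutList_append]

end BlockDecisionTree

lemma isBDTPRG_iff {n k s : ℕ} {A : Type*} [Fintype A] {γ : ℝ}
    {Gen : (Fin s → Bool) → Fin k → (Fin n → Bool)} :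
    IsBDTPRG n k s A γ Gen ↔
      ∀ v : List A → (Fin n → Bool) → A,
        tvDist (law fun x => treeOut v (Gen x)) (law (treeOut v)) ≤ γ := by
  simp only [IsBDTPRG, tvDist, law, treeOut_eq_iff]

section Extractor

variable {Ω : Type*} [Fintype Ω]

lemma prMass_const_inv_card (P : Ω → Prop) :
    prMass (fun _ => (Fintype.card Ω : ℝ)⁻¹) P = pr P := by
  rw [prMass, sum_const, nsmul_eq_mul, pr, div_eq_mul_inv]

lemma prMass_const_eq_and_le {c : ℝ} (hc : 0 ≤ c) (x : Ω) (P : Ω → Prop) :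
    prMass (fun _ => c) (fun ω => ω = x ∧ P ω) ≤ c := by
  rw [prMass, sum_const, nsmul_eq_mul]
  refine mul_le_of_le_one_left hc ?_
  norm_cast
  refine card_le_one.2 fun a ha b hb => ?_
  simp only [mem_filter] at ha hb
  rw [ha.2.1, hb.2.1]

lemma IsAvgExtractor.tvDist_law_le {s d m : ℕ} {κ β : ℝ}
    {Ext : (Fin s → Bool) → (Fin d → Bool) → (Fin m → Bool)}
    (hExt : IsAvgExtractor s d m κ β Ext) {Vt : Type} [Fintype Vt] (V : (Fin s → Bool) → Vt)
    (hV : (Fintype.card Vt : ℝ) ≤ 2 ^ ((s : ℝ) - κ)) :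
    tvDist (law fun p : (Fin s → Bool) × (Fin d → Bool) => (V p.1, Ext p.1 p.2))
      (law fun p : (Fin s → Bool) × (Fin m → Bool) => (V p.1, p.2)) ≤ β := by
  set c : ℝ := (Fintype.card (Fin s → Bool) : ℝ)⁻¹ with hc
  have hent : ∑ v : Vt, ⨆ x, prMass (fun _ => c) (fun ω => id ω = x ∧ V ω = v) ≤ 2 ^ (-κ) :=
    calc _ ≤ ∑ _v : Vt, c := sum_le_sum fun v _ =>
            ciSup_le fun x => prMass_const_eq_and_le (by positivity) x _
      _ = Fintype.card Vt * (2 ^ (s : ℝ))⁻¹ := by simp [hc]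
      _ ≤ 2 ^ ((s : ℝ) - κ) * (2 ^ (s : ℝ))⁻¹ := by gcongr
      _ = 2 ^ (-κ) := by rw [Real.rpow_sub two_pos, Real.rpow_neg zero_le_two]; field_simp
  refine le_of_eq_of_le ?_ (hExt _ _ (fun _ => c) id V (fun _ => by positivity) ?_ hent)
  · have hreal (v : Vt) (z : Fin m → Bool) :
        law (fun p : (Fin s → Bool) × (Fin d → Bool) => (V p.1, Ext p.1 p.2)) (v, z) =
          (∑ y, pr fun ω => V ω = v ∧ Ext (id ω) y = z) / 2 ^ d := by
      simp [law, pr_prod_eq_sum_div]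
    have hideal (v : Vt) (z : Fin m → Bool) :
        law (fun p : (Fin s → Bool) × (Fin m → Bool) => (V p.1, p.2)) (v, z) =
          pr (fun ω => V ω = v) / 2 ^ m := by
      refine (law_prod_dep V (fun _ => id) v z).trans ?_
      simp [law, pr_eq_self, div_eq_mul_inv]
    simp only [tvDist, Fintype.sum_prod_type, hc, prMass_const_inv_card, hreal, hideal]
  · simp [hc]

end Extractor

lemma card_fin_fun_eq_two_rpow (k : ℕ) (A : Type*) [Fintype A] [Nonempty A] :
    (Fintype.card (Fin k → A) : ℝ) = 2 ^ (k * Real.logb 2 (Fintype.card A)) := by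
  rw [mul_comm, Real.rpow_mul zero_le_two, Real.rpow_logb two_pos (by norm_num)
    (by exact_mod_cast Fintype.card_pos), Real.rpow_natCast]
  simp

theorem bdt_prg_recycle (n k s d : ℕ)
    (A : Type) [Fintype A] (γ β : ℝ)
    (Gen : (Fin s → Bool) → Fin k → (Fin n → Bool))
    (Ext : (Fin s → Bool) → (Fin d → Bool) → (Fin s → Bool))
    (hGen : IsBDTPRG n k s A γ Gen)
    (hExt : IsAvgExtractor s d s ((s : ℝ) - k * Real.logb 2 (Fintype.card A : ℝ)) β Ext) :
    IsBDTPRG n (k + k) (s + d) A (2 * γ + β)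
      (fun z => Fin.append (Gen fun i => z (Fin.castAdd d i))
        (Gen (Ext (fun i => z (Fin.castAdd d i)) fun i => z (Fin.natAdd s i)))) := by
  rw [isBDTPRG_iff] at hGen ⊢
  intro v
  have : Nonempty A := ⟨v [] fun _ => false⟩
  let V (x : Fin s → Bool) : Fin k → A := treeOut v (Gen x)
  let K (σ : Fin k → A) : (Fin k → Fin n → Bool) → Fin k → A := treeOut (subtree v (List.ofFn σ))
  let h (p : (Fin k → A) × (Fin s → Bool)) := (p.1, K p.1 (Gen p.2))
  let D₀ := h ∘ fun p : (Fin s → Bool) × (Fin d → Bool) => (V p.1, Ext p.1 p.2)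
  let D₁ := h ∘ fun p : (Fin s → Bool) × (Fin s → Bool) => (V p.1, p.2)
  let D₂ (p : (Fin s → Bool) × (Fin k → Fin n → Bool)) := (V p.1, K (V p.1) p.2)
  let D₃ (p : (Fin k → Fin n → Bool) × (Fin k → Fin n → Bool)) :=
    (treeOut v p.1, K (treeOut v p.1) p.2)
  have hreal := (congrArg law (funext fun z => treeOut_append v _ _)).trans
    (law_comp_equiv (Fin.appendEquiv s d).symm (Fin.appendEquiv k k ∘ D₀))
  have hideal := (law_comp_equiv (Fin.appendEquiv k k) (treeOut v)).symm.trans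
    (congrArg law (funext fun p => treeOut_append v p.1 p.2 : _ = Fin.appendEquiv k k ∘ D₃))
  have h₀₁ : tvDist (law D₀) (law D₁) ≤ β := (tvDist_law_comp_le h _ _).trans
    (hExt.tvDist_law_le V (by rw [sub_sub_cancel, card_fin_fun_eq_two_rpow]))
  have h₁₂ : tvDist (law D₁) (law D₂) ≤ γ :=
    tvDist_law_prod_dep_le V (fun σ r => K σ (Gen r)) K fun σ => hGen _
  have h₂₃ : tvDist (law D₂) (law D₃) ≤ γ :=
    (tvDist_law_prod_dep V (treeOut v) K).trans_le (hGen v)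
  calc _ = tvDist (law (Fin.appendEquiv k k ∘ D₀)) (law (Fin.appendEquiv k k ∘ D₃)) := by
        rw [← hreal, hideal]; rfl
    _ ≤ tvDist (law D₀) (law D₃) := tvDist_law_comp_le _ _ _
    _ ≤ tvDist (law D₀) (law D₂) + tvDist (law D₂) (law D₃) := tvDist_triangle _ _ _
    _ ≤ tvDist (law D₀) (law D₁) + tvDist (law D₁) (law D₂) + tvDist (law D₂) (law D₃) := by
      gcongr; exact tvDist_triangle _ _ _
    _ ≤ 2 * γ + β := by linarith
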